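/- arXiv:1901.10904 — 3 statements merged into one kernel-verified Lean document; each statement's English description precedes it below -/
import Mathlib

section
/- Let G be the group with presentation ⟨σ₁, σ₂ ∣ σ₁σ₂σ₁σ₂ = σ₂σ₁σ₂σ₁, (σ₁σ₂)² = 1⟩ (the quotient of the braid group of type B₂ by its center) and let φ : G → K be a group homomorphism into a group K. If the two elements φ(σ₁) and φ(σ₂σ₁σ₂⁻¹) of K freely generate a free subgroup of rank 2 (i.e., the group homomorphism from the free group on two generators sending the generators to these two elements is injective), then φ is injective. -/
/-!
Put `t = σ₁σ₂`; the relator `(σ₁σ₂)²` makes `t` an involution. Let `f` send the free group on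
`x, y` onto the subgroup `N` generated by `σ₁` and `σ₂σ₁σ₂⁻¹`. Conjugation by `t` sends `σ₁` to
`f(x y x⁻¹)` and preserves `N`; since `σ₁ ∈ N` and `σ₂ = σ₁⁻¹t`, every element lies in `N` or
in `Nt`. By hypothesis `φ ∘ f` is injective, which handles `N`. On `Nt` nothing is killed
because `φ t ∉ φ(N)`: from `φ t = φ(f w)` the conjugation formula and injectivity of `φ ∘ f`
give `w x w⁻¹ = x y x⁻¹`, making `x` and `y` conjugate, which the abelianization forbids.
-/

def B2QuotRels : Set (FreeGroup (Fin 2)) :=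
  { (FreeGroup.of 0 * FreeGroup.of 1) ^ 2 * ((FreeGroup.of 1 * FreeGroup.of 0) ^ 2)⁻¹,
    (FreeGroup.of 0 * FreeGroup.of 1) ^ 2 }

open Subgroup

theorem Subgroup.mem_or_mul_mem_of_closure_insert_eq_top {G : Type*} [Group G]
    {N : Subgroup G} {t : G} (ht : t * t = 1) (hN : ∀ n ∈ N, t * n * t ∈ N)
    (hgen : closure (insert t (N : Set G)) = ⊤) (g : G) : g ∈ N ∨ g * t ∈ N := by
  have ht' : t⁻¹ = t := inv_eq_of_mul_eq_one_right ht
  let S : Subgroup G :=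
    { carrier := {g | g ∈ N ∨ g * t ∈ N}
      one_mem' := Or.inl N.one_mem
      mul_mem' := by
        rintro g h (hg | hg) (hh | hh)
        · exact Or.inl (N.mul_mem hg hh)
        · exact Or.inr (by simpa only [mul_assoc] using N.mul_mem hg hh)
        · refine Or.inr ?_
          have := N.mul_mem hg (hN h hh)
          rwa [show g * t * (t * h * t) = g * (t * t) * h * t by group, ht, mul_one] at this
        · refine Or.inl ?_
          have := N.mul_mem hg (hN _ hh)
          rwa [show g * t * (t * (h * t) * t) = g * (t * t) * h * (t * t) by group, ht,
            mul_one, mul_one] at this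
      inv_mem' := by
        rintro g (hg | hg)
        · exact Or.inl (N.inv_mem hg)
        · refine Or.inr ?_
          have := hN _ (N.inv_mem hg)
          rwa [mul_inv_rev, ht', show t * (t * g⁻¹) * t = (t * t) * g⁻¹ * t by group, ht,
            one_mul] at this }
  have hle : closure (insert t (N : Set G)) ≤ S :=
    (closure_le S).2 (Set.insert_subset (Or.inr (by simp [ht])) fun _ => Or.inl)
  exact (hgen ▸ hle) (mem_top g)

theorem FreeGroup.not_isConj_of_ne {α : Type*} {i j : α} (hij : i ≠ j) :
    ¬ IsConj (FreeGroup.of i) (FreeGroup.of j) := by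
  classical
  intro h
  let ν : FreeGroup α →* Multiplicative ℤ :=
    FreeGroup.lift fun k => if k = i then Multiplicative.ofAdd 1 else 1
  have := isConj_iff_eq.1 (ν.map_isConj h)
  simp [ν, hij.symm] at this

namespace B2Quot

local notation "σ₁" => (PresentedGroup.of 0 : PresentedGroup B2QuotRels)
local notation "σ₂" => (PresentedGroup.of 1 : PresentedGroup B2QuotRels)
local notation "x" => (FreeGroup.of 0 : FreeGroup (Fin 2))
local notation "y" => (FreeGroup.of 1 : FreeGroup (Fin 2))

theorem of_mul_of_mul_self_eq_one : σ₁ * σ₂ * (σ₁ * σ₂) = 1 := by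
  have h := PresentedGroup.one_of_mem (show (x * y) ^ 2 ∈ B2QuotRels by simp [B2QuotRels])
  rwa [sq, map_mul, map_mul] at h

def freeHom : FreeGroup (Fin 2) →* PresentedGroup B2QuotRels :=
  FreeGroup.lift ![σ₁, σ₂ * σ₁ * σ₂⁻¹]

@[simp] theorem freeHom_x : freeHom x = σ₁ := FreeGroup.lift_apply_of

@[simp] theorem freeHom_y : freeHom y = σ₂ * σ₁ * σ₂⁻¹ := FreeGroup.lift_apply_of

theorem conj_eq_freeHom : (σ₁ * σ₂) * σ₁ * (σ₁ * σ₂)⁻¹ = freeHom (x * y * x⁻¹) := by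
  simp only [map_mul, map_inv, freeHom_x, freeHom_y]
  group

theorem conj_mem_range {n : PresentedGroup B2QuotRels} (hn : n ∈ freeHom.range) :
    σ₁ * σ₂ * n * (σ₁ * σ₂) ∈ freeHom.range := by
  have ht : (σ₁ * σ₂)⁻¹ = σ₁ * σ₂ := inv_eq_of_mul_eq_one_right of_mul_of_mul_self_eq_one
  suffices freeHom.range ≤ freeHom.range.comap (MulAut.conj (σ₁ * σ₂)).toMonoidHom by
    have := this hn
    rwa [mem_comap, MulEquiv.coe_toMonoidHom, MulAut.conj_apply, ht] at this
  refine FreeGroup.range_lift_le ?_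
  rintro _ ⟨i, rfl⟩
  fin_cases i
  · exact ⟨x * y * x⁻¹, conj_eq_freeHom.symm⟩
  · refine ⟨x * y⁻¹ * x * y * x⁻¹, ?_⟩
    -- conjugation by the involution `σ₁σ₂` swaps `σ₁` and `(σ₁σ₂)σ₁(σ₁σ₂)⁻¹`
    have hy : freeHom y = σ₁⁻¹ * (σ₁ * σ₂ * σ₁ * (σ₁ * σ₂)⁻¹) * σ₁ := by
      rw [conj_eq_freeHom]
      simp only [map_mul, map_inv, freeHom_x, freeHom_y]
      group
    change _ = σ₁ * σ₂ * (σ₂ * σ₁ * σ₂⁻¹) * (σ₁ * σ₂)⁻¹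
    rw [← freeHom_y]
    simp only [map_mul, map_inv, freeHom_x, hy]
    generalize σ₁ * σ₂ = t at ht ⊢
    simp only [mul_inv_rev, inv_inv, ht]
    group

theorem closure_insert_range_eq_top :
    closure (insert (σ₁ * σ₂) (freeHom.range : Set (PresentedGroup B2QuotRels))) = ⊤ := by
  refine eq_top_iff.2 fun g _ => PresentedGroup.generated_by _ _ (fun i => ?_) g
  have hσ₁ : σ₁ ∈ closure (insert (σ₁ * σ₂) (freeHom.range : Set (PresentedGroup B2QuotRels))) :=
    subset_closure (Set.mem_insert_of_mem _ ⟨x, freeHom_x⟩)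
  fin_cases i
  · exact hσ₁
  · simpa using mul_mem (inv_mem hσ₁) (subset_closure (Set.mem_insert _ _))

theorem map_mul_not_mem_range {K : Type*} [Group K] (ψ : PresentedGroup B2QuotRels →* K)
    (hψ : Function.Injective (ψ.comp freeHom)) : ψ (σ₁ * σ₂) ∉ (ψ.comp freeHom).range := by
  rintro ⟨w, hw⟩
  rw [MonoidHom.comp_apply] at hw
  have : w * x * w⁻¹ = x * y * x⁻¹ := hψ <| by
    rw [MonoidHom.comp_apply, MonoidHom.comp_apply, ← conj_eq_freeHom]
    simp only [map_mul, map_inv, hw, freeHom_x]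
  exact FreeGroup.not_isConj_of_ne (by decide : (1 : Fin 2) ≠ 0) <|
    (isConj_iff.2 ⟨x, rfl⟩).trans ((isConj_iff.2 ⟨w, this⟩).symm)

theorem mem_range_or_mul_mem_range (g : PresentedGroup B2QuotRels) :
    g ∈ freeHom.range ∨ g * (σ₁ * σ₂) ∈ freeHom.range :=
  mem_or_mul_mem_of_closure_insert_eq_top of_mul_of_mul_self_eq_one (fun _ => conj_mem_range)
    closure_insert_range_eq_top g

end B2Quot

theorem stmt_1 {K : Type*} [Group K] (φ : PresentedGroup B2QuotRels →* K)
    (hfree : Function.Injective (FreeGroup.lift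
      (![φ (PresentedGroup.of 0),
         φ (PresentedGroup.of 1 * PresentedGroup.of 0 * (PresentedGroup.of 1)⁻¹)] :
        Fin 2 → K))) :
    Function.Injective φ := by
  have hinj : Function.Injective (φ.comp B2Quot.freeHom) := by
    convert hfree using 2
    exact FreeGroup.ext_hom _ _ fun i => by fin_cases i <;> simp
  refine (injective_iff_map_eq_one φ).2 fun g hg => ?_
  obtain ⟨w, rfl⟩ | ⟨w, hw⟩ := B2Quot.mem_range_or_mul_mem_range g
  · rw [hinj (show (φ.comp B2Quot.freeHom) w = (φ.comp B2Quot.freeHom) 1 by simpa using hg),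
      map_one]
  · exact absurd ⟨w, by simp [hw, hg]⟩ (B2Quot.map_mul_not_mem_range φ hinj)
end

section
/- Let K be a group, let r ≥ 2 be an integer, and let x, y ∈ K satisfy yʳ = 1. Suppose the r elements x, yxy⁻¹, y²xy⁻², …, y^{r−1}xy^{1−r} freely generate a free subgroup of K of rank r (i.e., the group homomorphism from the free group on r generators sending the i-th generator to yⁱxy⁻ⁱ for 0 ≤ i ≤ r−1 is injective). Then the group homomorphism from the free product ℤ * (ℤ/rℤ) to K sending the generator of the factor ℤ to x and the generator of the factor ℤ/rℤ to y is injective; in particular, the subgroup of K generated by x and y is isomorphic to ℤ * ℤ/rℤ. -/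
open Monoid Multiplicative

section aux
variable (r : ℕ)

/-- cyclic shift action of `ZMod r` on the free group on `ZMod r` generators. -/
def shiftAut : Multiplicative (ZMod r) →* MulAut (FreeGroup (ZMod r)) :=
  MonoidHom.mk' (fun b => FreeGroup.freeGroupCongr (Equiv.addRight b.toAdd))
    (fun a b => by
      have h : (Equiv.addRight (b.toAdd)).trans (Equiv.addRight (a.toAdd))
          = Equiv.addRight ((a * b).toAdd) := by
        ext c
        simp only [Equiv.trans_apply, Equiv.coe_addRight, toAdd_mul]
        ring
      show _ = MulEquiv.trans _ _
      rw [FreeGroup.freeGroupCongr_trans, h])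

@[simp] lemma shiftAut_of (b : Multiplicative (ZMod r)) (c : ZMod r) :
    shiftAut r b (FreeGroup.of c) = FreeGroup.of (c + b.toAdd) := by
  simp [shiftAut, MonoidHom.mk'_apply]

variable {K : Type*} [Group K] (x y : K)

/-- the map from the free group to `K` sending generator `b` to `y^b.val * x * y^{-b.val}`. -/
def phiK : FreeGroup (ZMod r) →* K :=
  FreeGroup.lift fun b : ZMod r => y ^ b.val * x * (y ^ b.val)⁻¹

@[simp] lemma phiK_of (b : ZMod r) : phiK r x y (FreeGroup.of b) = y ^ b.val * x * (y ^ b.val)⁻¹ :=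
  FreeGroup.lift_apply_of

lemma ypow_mod (hy : y ^ r = 1) (a : ℕ) : y ^ (a % r) = y ^ a := by
  conv_rhs => rw [← Nat.div_add_mod a r]
  rw [pow_add, pow_mul, hy, one_pow, one_mul]

/-- the map `Multiplicative (ZMod r) →* K` sending `ofAdd b` to `y ^ b.val`. -/
def rhoK [NeZero r] (hy : y ^ r = 1) : Multiplicative (ZMod r) →* K :=
  MonoidHom.mk' (fun b => y ^ (b.toAdd).val)
    (fun a b => by
      show y ^ (a.toAdd + b.toAdd).val = _
      rw [ZMod.val_add, ypow_mod r y hy, pow_add])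

@[simp] lemma rhoK_apply [NeZero r] (hy : y ^ r = 1) (b : Multiplicative (ZMod r)) :
    rhoK r y hy b = y ^ (b.toAdd).val := rfl

variable [NeZero r] (hy : y ^ r = 1)

lemma hcompatK : ∀ b : Multiplicative (ZMod r),
    (phiK r x y).comp ((shiftAut r) b).toMonoidHom
      = (MulAut.conj ((rhoK r y hy) b)).toMonoidHom.comp (phiK r x y) := by
  intro b
  apply FreeGroup.ext_hom
  intro c
  show phiK r x y (shiftAut r b (FreeGroup.of c))
    = MulAut.conj (rhoK r y hy b) (phiK r x y (FreeGroup.of c))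
  rw [shiftAut_of, phiK_of, phiK_of, MulAut.conj_apply, rhoK_apply]
  rw [ZMod.val_add, ypow_mod r y hy, pow_add]
  group

/-- the homomorphism from the semidirect product to `K`. -/
def psiA : SemidirectProduct (FreeGroup (ZMod r)) (Multiplicative (ZMod r)) (shiftAut r) →* K :=
  SemidirectProduct.lift (phiK r x y) (rhoK r y hy) (hcompatK r x y hy)

/-- `FreeGroup (ZMod r)` into the coproduct, generator `c ↦ inr c * inl 1 * inr c⁻¹`. -/
def fAC : FreeGroup (ZMod r) →* Coprod (Multiplicative ℤ) (Multiplicative (ZMod r)) :=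
  FreeGroup.lift fun c : ZMod r =>
    Coprod.inr (Multiplicative.ofAdd c) * Coprod.inl (Multiplicative.ofAdd (1 : ℤ))
      * (Coprod.inr (Multiplicative.ofAdd c))⁻¹

omit [NeZero r] in
lemma hcompatC : ∀ b : Multiplicative (ZMod r),
    (fAC r).comp ((shiftAut r) b).toMonoidHom
      = (MulAut.conj (Coprod.inr b)).toMonoidHom.comp (fAC r) := by
  intro b
  apply FreeGroup.ext_hom
  intro c
  show fAC r (shiftAut r b (FreeGroup.of c))
    = MulAut.conj (Coprod.inr b) (fAC r (FreeGroup.of c))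
  rw [shiftAut_of, MulAut.conj_apply]
  simp only [fAC, FreeGroup.lift_apply_of]
  rw [show c + b.toAdd = b.toAdd + c from add_comm _ _, ofAdd_add, map_mul]
  have h : Coprod.inr (Multiplicative.ofAdd b.toAdd)
      = (Coprod.inr b : Coprod (Multiplicative ℤ) (Multiplicative (ZMod r))) := rfl
  rw [h]
  group

/-- the homomorphism from the semidirect product back to the coproduct. -/
def PsiC : SemidirectProduct (FreeGroup (ZMod r)) (Multiplicative (ZMod r)) (shiftAut r) →*
    Coprod (Multiplicative ℤ) (Multiplicative (ZMod r)) :=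
  SemidirectProduct.lift (fAC r) Coprod.inr (hcompatC r)

/-- the homomorphism from the coproduct to the semidirect product. -/
def PhiC : Coprod (Multiplicative ℤ) (Multiplicative (ZMod r)) →*
    SemidirectProduct (FreeGroup (ZMod r)) (Multiplicative (ZMod r)) (shiftAut r) :=
  Coprod.lift (zpowersHom _ (SemidirectProduct.inl (FreeGroup.of (0 : ZMod r))))
    SemidirectProduct.inr

end aux

open Monoid in
theorem stmt_3 {K : Type*} [Group K] (r : ℕ) (hr : 2 ≤ r) (x y : K)
    (hy : y ^ r = 1)
    (hfree : Function.Injective (FreeGroup.lift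
      (fun i : Fin r => y ^ (i : ℕ) * x * (y ^ (i : ℕ))⁻¹))) :
    ∃ ψ : Coprod (Multiplicative ℤ) (Multiplicative (ZMod r)) →* K,
      ψ (Coprod.inl (Multiplicative.ofAdd (1 : ℤ))) = x ∧
      ψ (Coprod.inr (Multiplicative.ofAdd (1 : ZMod r))) = y ∧
      Function.Injective ψ ∧
      Nonempty ((Subgroup.closure {x, y} : Subgroup K) ≃*
        Coprod (Multiplicative ℤ) (Multiplicative (ZMod r))) := by
  haveI : NeZero r := ⟨by omega⟩
  haveI : Fact (1 < r) := ⟨by omega⟩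
  -- injectivity of phiK
  let e : ZMod r ≃ Fin r :=
    { toFun := fun b => ⟨b.val, ZMod.val_lt b⟩
      invFun := fun i => ((i : ℕ) : ZMod r)
      left_inv := fun b => ZMod.natCast_rightInverse b
      right_inv := fun i => by
        ext
        simp [ZMod.val_natCast, Nat.mod_eq_of_lt i.isLt] }
  have hcomp : (FreeGroup.lift (fun i : Fin r => y ^ (i : ℕ) * x * (y ^ (i : ℕ))⁻¹)).comp
      (FreeGroup.freeGroupCongr e).toMonoidHom = phiK r x y := by
    apply FreeGroup.ext_hom
    intro b
    simp [e]
  have hphiK_inj : Function.Injective (phiK r x y) := by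
    rw [← hcomp, MonoidHom.coe_comp]
    exact hfree.comp (FreeGroup.freeGroupCongr e).injective
  -- injectivity of psiA
  have hψA_inj : Function.Injective (psiA r x y hy) := by
    rw [injective_iff_map_eq_one]
    rintro ⟨g, b⟩ h1
    rw [SemidirectProduct.mk_eq_inl_mul_inr, map_mul] at h1
    rw [show psiA r x y hy (SemidirectProduct.inl g) = phiK r x y g from
      SemidirectProduct.lift_inl _ _ _ g] at h1
    rw [show psiA r x y hy (SemidirectProduct.inr b) = rhoK r y hy b from
      SemidirectProduct.lift_inr _ _ _ b] at h1
    have hrho : ((phiK r x y) g)⁻¹ = rhoK r y hy b := inv_eq_of_mul_eq_one_right h1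
    have key : ∀ h : FreeGroup (ZMod r), shiftAut r b h = g⁻¹ * h * g := by
      intro h
      apply hphiK_inj
      have h2 := DFunLike.congr_fun (hcompatK r x y hy b) h
      simp only [MonoidHom.comp_apply, MulEquiv.coe_toMonoidHom, MulAut.conj_apply] at h2
      rw [h2, ← hrho, map_mul, map_mul, map_inv, inv_inv]
    -- project to abelianization coordinate 0
    set π : FreeGroup (ZMod r) →* Multiplicative ℤ :=
      FreeGroup.lift fun c : ZMod r => if c = 0 then Multiplicative.ofAdd (1 : ℤ) else 1 with hπ
    have hb : b.toAdd = 0 := by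
      by_contra hne
      have h0 := congrArg π (key (FreeGroup.of 0))
      rw [shiftAut_of, zero_add, map_mul, map_mul, map_inv] at h0
      rw [hπ] at h0
      rw [FreeGroup.lift_apply_of, FreeGroup.lift_apply_of, if_pos rfl, if_neg hne] at h0
      rw [mul_comm, ← mul_assoc] at h0
      simp only [mul_inv_cancel, one_mul] at h0
      have h2 := congrArg Multiplicative.toAdd h0
      simp at h2
    have hb1 : b = 1 := by
      have h3 : b = Multiplicative.ofAdd b.toAdd := rfl
      rw [h3, hb]; rfl
    subst hb1
    rw [map_one, mul_one] at h1
    have hg : g = 1 := hphiK_inj (h1.trans (map_one _).symm)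
    subst hg
    rfl
  -- the isomorphism Coprod ≃* A
  have hΨa0 : PsiC r (SemidirectProduct.inl (FreeGroup.of (0 : ZMod r)))
      = Coprod.inl (Multiplicative.ofAdd (1 : ℤ)) := by
    rw [PsiC, SemidirectProduct.lift_inl]
    simp [fAC]
  have h1 : (PsiC r).comp (PhiC r) = MonoidHom.id _ := by
    apply Coprod.hom_ext
    · rw [MonoidHom.comp_assoc]
      show (PsiC r).comp (zpowersHom _ _) = Coprod.inl
      apply MonoidHom.ext_mint
      rw [MonoidHom.comp_apply, zpowersHom_apply, toAdd_ofAdd, zpow_one, hΨa0]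
    · rw [MonoidHom.comp_assoc]
      show (PsiC r).comp SemidirectProduct.inr = Coprod.inr
      exact SemidirectProduct.lift_comp_inr _ _ _
  have h2 : (PhiC r).comp (PsiC r) = MonoidHom.id _ := by
    apply SemidirectProduct.hom_ext
    · apply FreeGroup.ext_hom
      intro c
      show PhiC r (PsiC r (SemidirectProduct.inl (FreeGroup.of c)))
        = SemidirectProduct.inl (FreeGroup.of c)
      rw [PsiC, SemidirectProduct.lift_inl]
      simp only [fAC, FreeGroup.lift_apply_of]
      rw [map_mul, map_mul, map_inv]
      have hinr : ∀ m : Multiplicative (ZMod r), PhiC r (Coprod.inr m)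
          = SemidirectProduct.inr m := fun m => Coprod.lift_apply_inr _ _ _
      have hinl : PhiC r (Coprod.inl (Multiplicative.ofAdd (1 : ℤ)))
          = SemidirectProduct.inl (FreeGroup.of (0 : ZMod r)) := by
        rw [PhiC, Coprod.lift_apply_inl, zpowersHom_apply, toAdd_ofAdd, zpow_one]
      rw [hinr, hinl]
      rw [← map_inv, ← SemidirectProduct.inl_aut]
      congr 1
      rw [shiftAut_of, toAdd_ofAdd, zero_add]
    · show (PhiC r).comp ((PsiC r).comp SemidirectProduct.inr) = SemidirectProduct.inr
      rw [PsiC, SemidirectProduct.lift_comp_inr]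
      exact Coprod.lift_comp_inr _ _
  have hΘinj : Function.Injective (PhiC r) :=
    (MonoidHom.toMulEquiv (PhiC r) (PsiC r) h1 h2).injective
  have happx : (psiA r x y hy).comp (PhiC r) (Coprod.inl (Multiplicative.ofAdd (1 : ℤ))) = x := by
    rw [MonoidHom.comp_apply, PhiC, Coprod.lift_apply_inl, zpowersHom_apply, toAdd_ofAdd,
      zpow_one, psiA, SemidirectProduct.lift_inl, phiK_of]
    simp
  have happy : (psiA r x y hy).comp (PhiC r)
      (Coprod.inr (Multiplicative.ofAdd (1 : ZMod r))) = y := by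
    rw [MonoidHom.comp_apply, PhiC, Coprod.lift_apply_inr, psiA, SemidirectProduct.lift_inr,
      rhoK_apply, toAdd_ofAdd, ZMod.val_one, pow_one]
  have hinj : Function.Injective ((psiA r x y hy).comp (PhiC r)) := by
    rw [MonoidHom.coe_comp]
    exact hψA_inj.comp hΘinj
  refine ⟨(psiA r x y hy).comp (PhiC r), happx, happy, hinj, ?_⟩
  have hrange : ((psiA r x y hy).comp (PhiC r)).range = Subgroup.closure {x, y} := by
    apply le_antisymm
    · rintro _ ⟨w, rfl⟩
      induction w using Coprod.induction_on with
      | inl m =>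
        have hm : (psiA r x y hy).comp (PhiC r) (Coprod.inl m)
            = x ^ m.toAdd := by
          rw [MonoidHom.comp_apply, PhiC, Coprod.lift_apply_inl, zpowersHom_apply, map_zpow]
          congr 1
          rw [psiA, SemidirectProduct.lift_inl, phiK_of]
          simp
        rw [hm]
        exact Subgroup.zpow_mem _ (Subgroup.subset_closure (by simp)) _
      | inr n =>
        have hn : (psiA r x y hy).comp (PhiC r) (Coprod.inr n) = y ^ n.toAdd.val := by
          rw [MonoidHom.comp_apply, PhiC, Coprod.lift_apply_inr, psiA,
            SemidirectProduct.lift_inr, rhoK_apply]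
        rw [hn]
        exact Subgroup.pow_mem _ (Subgroup.subset_closure (by simp)) _
      | mul a b ha hb => rw [map_mul]; exact Subgroup.mul_mem _ ha hb
    · rw [Subgroup.closure_le]
      rintro z hz
      rcases hz with rfl | hz
      · exact ⟨Coprod.inl (Multiplicative.ofAdd (1 : ℤ)), happx⟩
      · rcases hz with rfl
        exact ⟨Coprod.inr (Multiplicative.ofAdd (1 : ZMod r)), happy⟩
  exact ⟨(MulEquiv.subgroupCongr hrange).symm.trans (MonoidHom.ofInjective hinj).symm⟩
end

section
/- There is a group isomorphism from the group with presentation ⟨σ₁, σ₂ ∣ σ₁σ₂σ₁σ₂ = σ₂σ₁σ₂σ₁, (σ₁σ₂)² = 1⟩ (the quotient of the braid group of type B₂ by its center) to the free product ℤ * ℤ/2ℤ which sends σ₁ to x and σ₂ to x⁻¹y, where x denotes the generator of the factor ℤ and y the generator of the factor ℤ/2ℤ. -/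
/-!
The map `σ₁ ↦ x`, `σ₂ ↦ x⁻¹y` sends `σ₁σ₂` to `y` and `σ₂σ₁` to its conjugate `x⁻¹yx`, both of
order two, so it kills both relators. Conversely `x ↦ σ₁`, `y ↦ σ₁σ₂` is well defined because
`(σ₁σ₂)²` is a relator, and the two maps are inverse to each other on generators.
-/

open Multiplicative Monoid

theorem AddMonoidHom.ext_zmod {n : ℕ} {A : Type*} [AddMonoid A] {f g : ZMod n →+ A}
    (h1 : f 1 = g 1) : f = g :=
  (AddMonoidHom.cancel_right (f := Int.castAddHom (ZMod n)) ZMod.intCast_surjective).1 <|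
    AddMonoidHom.ext_int <| by simpa using h1

theorem MonoidHom.ext_mzmod {n : ℕ} {M : Type*} [Monoid M] {f g : Multiplicative (ZMod n) →* M}
    (h1 : f (ofAdd 1) = g (ofAdd 1)) : f = g :=
  MonoidHom.toAdditiveRight.injective <| AddMonoidHom.ext_zmod <| Additive.toMul.injective h1

def zmodPowersHom {G : Type*} [Group G] {n : ℕ} (g : G) (hg : g ^ n = 1) :
    Multiplicative (ZMod n) →* G :=
  AddMonoidHom.toMultiplicativeLeft <|
    ZMod.lift n ⟨zmultiplesHom (Additive G) (Additive.ofMul g), by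
      simpa [← ofMul_pow] using congrArg Additive.ofMul hg⟩

@[simp]
theorem zmodPowersHom_ofAdd_one {G : Type*} [Group G] {n : ℕ} (g : G) (hg : g ^ n = 1) :
    zmodPowersHom g hg (ofAdd 1) = g := by
  rw [zmodPowersHom, AddMonoidHom.toMultiplicativeLeft_apply_apply, toAdd_ofAdd, ← Int.cast_one,
    ZMod.lift_coe]
  simp

namespace B2Quot

abbrev Target := Coprod (Multiplicative ℤ) (Multiplicative (ZMod 2))

def x : Target := Coprod.inl (ofAdd 1)
def y : Target := Coprod.inr (ofAdd 1)

theorem y_sq : y ^ 2 = 1 := by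
  rw [y, ← map_pow]; exact map_one _

theorem lift_rels : ∀ r ∈ B2QuotRels, FreeGroup.lift ![x, x⁻¹ * y] r = 1 := by
  have h01 : FreeGroup.lift ![x, x⁻¹ * y] (.of 0 * .of 1) = y := by simp
  have h10 : FreeGroup.lift ![x, x⁻¹ * y] (.of 1 * .of 0) = x⁻¹ * y * x := by simp
  have h10_sq : (x⁻¹ * y * x) ^ 2 = 1 := by
    calc (x⁻¹ * y * x) ^ 2 = x⁻¹ * y ^ 2 * x := by rw [sq, sq]; group
      _ = 1 := by rw [y_sq]; group
  rintro r (rfl | rfl) <;> simp [h01, h10, h10_sq, y_sq]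

def toTarget : PresentedGroup B2QuotRels →* Target := PresentedGroup.toGroup lift_rels

theorem toTarget_of_zero : toTarget (.of 0) = x := PresentedGroup.toGroup.of lift_rels
theorem toTarget_of_one : toTarget (.of 1) = x⁻¹ * y := PresentedGroup.toGroup.of lift_rels

theorem of_mul_of_sq :
    (PresentedGroup.of 0 * PresentedGroup.of 1 : PresentedGroup B2QuotRels) ^ 2 = 1 :=
  PresentedGroup.one_of_mem (Or.inr rfl)

def ofTarget : Target →* PresentedGroup B2QuotRels :=
  Coprod.lift (zpowersHom _ (.of 0)) (zmodPowersHom _ of_mul_of_sq)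

theorem ofTarget_x : ofTarget x = .of 0 := by simp [ofTarget, x]
theorem ofTarget_y : ofTarget y = .of 0 * .of 1 := by simp [ofTarget, y]

def equiv : PresentedGroup B2QuotRels ≃* Target :=
  toTarget.toMulEquiv ofTarget
    (PresentedGroup.ext fun i => by
      fin_cases i
      · simp [toTarget_of_zero, ofTarget_x]
      · simp [toTarget_of_one, ofTarget_x, ofTarget_y])
    (Coprod.hom_ext (MonoidHom.ext_mint <| show toTarget (ofTarget x) = x by
        simp [ofTarget_x, toTarget_of_zero])
      (MonoidHom.ext_mzmod <| show toTarget (ofTarget y) = y by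
        simp [ofTarget_y, toTarget_of_zero, toTarget_of_one]))

end B2Quot

open Monoid in
theorem stmt_4 :
    ∃ e : PresentedGroup B2QuotRels ≃* Coprod (Multiplicative ℤ) (Multiplicative (ZMod 2)),
      e (PresentedGroup.of 0) = Coprod.inl (Multiplicative.ofAdd (1 : ℤ)) ∧
      e (PresentedGroup.of 1) =
        (Coprod.inl (Multiplicative.ofAdd (1 : ℤ)))⁻¹ *
          Coprod.inr (Multiplicative.ofAdd (1 : ZMod 2)) :=
  ⟨B2Quot.equiv, B2Quot.toTarget_of_zero, B2Quot.toTarget_of_one⟩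
end
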